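/- Let (A, h) be an AssDer pair and (M, h_M) a module over (A, h). There is a long exact sequence of cohomology groups 0 → H¹_AssDer(A,M) → Der(A,M) → Der(A,M) → H²_AssDer(A,M) → H²_Hoch(A,M) → ⋯ → H^{n−1}_Hoch(A,M) → Hⁿ_AssDer(A,M) → Hⁿ_Hoch(A,M) → Hⁿ_Hoch(A,M) → H^{n+1}_AssDer(A,M) → ⋯, relating the AssDer cohomology to Hochschild cohomology, arising because the AssDer complex is the mapping cone of the chain map Δ on the Hochschild complex. -/

import Mathlib

open Finset

namespace Stmt11

variable {k A M B : Type*}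

/-- Partial composition `f ∘ᵢ μ` (0-based slot `i`). -/
def insMul (mul : A → A → A) {N : ℕ} (f : (Fin (N + 1) → A) → M) (i : Fin (N + 1))
    (v : Fin (N + 2) → A) : M :=
  f fun j =>
    if (j : ℕ) < (i : ℕ) then v ⟨j, Nat.lt_succ_of_lt j.isLt⟩
    else if (j : ℕ) = (i : ℕ) then
      mul (v ⟨j, Nat.lt_succ_of_lt j.isLt⟩) (v ⟨(j : ℕ) + 1, Nat.succ_lt_succ j.isLt⟩)
    else v ⟨(j : ℕ) + 1, Nat.succ_lt_succ j.isLt⟩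

/-- Partial composition `f ∘ᵢ u` with a unary operation `u`. -/
def insUn (u : A → A) {N : ℕ} (f : (Fin N → A) → M) (i : Fin N) (v : Fin N → A) : M :=
  f (Function.update v i (u (v i)))

/-- `μ ∘₁ f`. -/
def mulL (act : M → A → M) {N : ℕ} (f : (Fin (N + 1) → A) → M) (v : Fin (N + 2) → A) : M :=
  act (f fun j => v j.castSucc) (v (Fin.last (N + 1)))

/-- `μ ∘₂ f`. -/
def mulR (act : A → M → M) {N : ℕ} (f : (Fin (N + 1) → A) → M) (v : Fin (N + 2) → A) : M :=
  act (v 0) (f fun j => v j.succ)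

section DGDer

variable [AddCommGroup B]

/-- The AsGDer differential `∂¹` of the triple `(B, hh, dd)` on `C¹ = Hom(B,B)`. -/
def d1 (mul : B → B → B) (hh dd : B → B) (f : (Fin 1 → B) → B) :
    ((Fin 2 → B) → B) × ((Fin 1 → B) → B) × ((Fin 1 → B) → B) :=
  (fun v => mul (f fun _ => v 0) (v 1) + mul (v 0) (f fun _ => v 1)
      - f fun _ => mul (v 0) (v 1),
   fun v => hh (f v) - f fun _ => hh (v 0),
   fun v => dd (f v) - f fun _ => dd (v 0))

/-- The AsGDer differential `∂ⁿ` (`n = m + 2`) of the triple `(B, hh, dd)`. -/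
def dn (mul : B → B → B) (hh dd : B → B) {m : ℕ}
    (f₁ : (Fin (m + 2) → B) → B) (f₂ f₃ : (Fin (m + 1) → B) → B) :
    ((Fin (m + 3) → B) → B) × ((Fin (m + 2) → B) → B) × ((Fin (m + 2) → B) → B) :=
  (fun v =>
      mulR mul f₁ v + (∑ i : Fin (m + 2), ((-1 : ℤ) ^ ((i : ℕ) + 1)) • insMul mul f₁ i v)
        + ((-1 : ℤ) ^ (m + 3)) • mulL mul f₁ v,
   fun v =>
      mulR mul f₂ v + ((-1 : ℤ) ^ (m + 2)) • mulL mul f₂ v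
        + (∑ i : Fin (m + 1), ((-1 : ℤ) ^ ((i : ℕ) + 1)) • insMul mul f₂ i v)
        + ((-1 : ℤ) ^ (m + 1)) • (hh (f₁ v) - ∑ i : Fin (m + 2), insUn hh f₁ i v),
   fun v =>
      mulR mul f₃ v + ((-1 : ℤ) ^ (m + 2)) • mulL mul f₃ v
        + (∑ i : Fin (m + 1), ((-1 : ℤ) ^ ((i : ℕ) + 1)) • insMul mul f₃ i v)
        + ((-1 : ℤ) ^ (m + 1)) •
            (dd (f₁ v) - insUn dd f₁ 0 v - ∑ i : Fin (m + 1), insUn hh f₁ i.succ v))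

end DGDer

section Bimodule

variable [Ring A] [AddCommGroup M] [Module A M] [Module Aᵐᵒᵖ M]

/-- The Hochschild differential of `A` with coefficients in the bimodule `M`. -/
def dHoch {m : ℕ} (f : (Fin (m + 1) → A) → M) (v : Fin (m + 2) → A) : M :=
  v 0 • f (fun j => v j.succ) +
    (∑ i : Fin (m + 1), ((-1 : ℤ) ^ ((i : ℕ) + 1)) • insMul (· * ·) f i v) +
    ((-1 : ℤ) ^ (m + 2)) •
      (MulOpposite.op (v (Fin.last (m + 1))) • f fun j => v j.castSucc)

/-- The map `Δ(f) = Σᵢ f ∘ (id ⊗ ⋯ ⊗ h ⊗ ⋯ ⊗ id) − h_M ∘ f`. -/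
def deltaMap (hh : A → A) (hM : M → M) {N : ℕ} (f : (Fin N → A) → M)
    (v : Fin N → A) : M :=
  (∑ i : Fin N, insUn hh f i v) - hM (f v)

/-- The differential of the kernel complex `K•`: the Hochschild differential with the
leading term `a₁ · f(a₂, …)` omitted. -/
def dK {m : ℕ} (f : (Fin (m + 1) → A) → M) (v : Fin (m + 2) → A) : M :=
  (∑ i : Fin (m + 1), ((-1 : ℤ) ^ ((i : ℕ) + 1)) • insMul (· * ·) f i v) +
    ((-1 : ℤ) ^ (m + 2)) •
      (MulOpposite.op (v (Fin.last (m + 1))) • f fun j => v j.castSucc)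

/-- Multiplication of the semi-direct product `A ⋉ M`. -/
def mulSd (p q : A × M) : A × M :=
  (p.1 * q.1, p.1 • q.2 + MulOpposite.op q.1 • p.2)

/-- The map `h ⊕ h_M` on `A ⋉ M`. -/
def mapSd (hh : A → A) (hM : M → M) (p : A × M) : A × M := (hh p.1, hM p.2)

/-- The identification of a cochain `A^{⊗N} → M` with a cochain of `A ⋉ M` taking
values in `M` and vanishing whenever some argument lies in `M`. -/
def liftC {N : ℕ} (f : (Fin N → A) → M) (v : Fin N → A × M) : A × M :=
  (0, f fun i => (v i).1)

/-- Restriction of a cochain of `A ⋉ M` to a cochain `A^{⊗N} → M`. -/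
def projC {N : ℕ} (F : (Fin N → A × M) → A × M) (v : Fin N → A) : M :=
  (F fun i => (v i, 0)).2

/-- Degree-1 differential of the AsGDer complex of `(A, h, δ)` with coefficients in
the AsGDer-module `(M, h_M, δ_M)`: the restriction of the AsGDer differential of the
semi-direct product triple `(A ⋉ M, h ⊕ h_M, δ ⊕ δ_M)`. -/
def dGM1 (hh dd : A → A) (hM dM : M → M) (f : (Fin 1 → A) → M) :
    ((Fin 2 → A) → M) × ((Fin 1 → A) → M) × ((Fin 1 → A) → M) :=
  (projC (d1 (B := A × M) mulSd (mapSd hh hM) (mapSd dd dM) (liftC f)).1,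
   projC (d1 (B := A × M) mulSd (mapSd hh hM) (mapSd dd dM) (liftC f)).2.1,
   projC (d1 (B := A × M) mulSd (mapSd hh hM) (mapSd dd dM) (liftC f)).2.2)

/-- Degree-`(m+2)` differential of the AsGDer complex of `(A, h, δ)` with coefficients
in `(M, h_M, δ_M)`: the restriction of the AsGDer differential of the semi-direct
product triple. -/
def dGMn (hh dd : A → A) (hM dM : M → M) {m : ℕ}
    (f₁ : (Fin (m + 2) → A) → M) (f₂ f₃ : (Fin (m + 1) → A) → M) :
    ((Fin (m + 3) → A) → M) × ((Fin (m + 2) → A) → M) × ((Fin (m + 2) → A) → M) :=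
  (projC (dn (B := A × M) mulSd (mapSd hh hM) (mapSd dd dM)
      (liftC f₁) (liftC f₂) (liftC f₃)).1,
   projC (dn (B := A × M) mulSd (mapSd hh hM) (mapSd dd dM)
      (liftC f₁) (liftC f₂) (liftC f₃)).2.1,
   projC (dn (B := A × M) mulSd (mapSd hh hM) (mapSd dd dM)
      (liftC f₁) (liftC f₂) (liftC f₃)).2.2)

/-- Degree-1 differential of the AssDer complex: `∂'(f) = (d_Hoch f, −Δ f)`. -/
def dA1 (hh : A → A) (hM : M → M) (f : (Fin 1 → A) → M) :
    ((Fin 2 → A) → M) × ((Fin 1 → A) → M) :=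
  (dHoch f, fun v => -(deltaMap hh hM f v))

/-- Degree-`(m+2)` differential of the AssDer complex:
`∂'(fₙ, f̄ₙ) = (d_Hoch fₙ, d_Hoch f̄ₙ + (−1)ⁿ Δ fₙ)`. -/
def dAn (hh : A → A) (hM : M → M) {m : ℕ}
    (f₁ : (Fin (m + 2) → A) → M) (f₂ : (Fin (m + 1) → A) → M) :
    ((Fin (m + 3) → A) → M) × ((Fin (m + 2) → A) → M) :=
  (dHoch f₁, fun v => dHoch f₂ v + ((-1 : ℤ) ^ (m + 2)) • deltaMap hh hM f₁ v)

end Bimodule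

/-- A plain cochain is (the coercion of) a `k`-multilinear map. -/
def IsML (k : Type*) [Field k] {A M : Type*} [Ring A] [Algebra k A]
    [AddCommGroup M] [Module k M] {N : ℕ} (f : (Fin N → A) → M) : Prop :=
  ∃ F : MultilinearMap k (fun _ : Fin N => A) M, ⇑F = f

section Predicates

variable (k : Type*) [Field k] [Ring A] [Algebra k A] [AddCommGroup M] [Module k M]
  [Module A M] [Module Aᵐᵒᵖ M]

/-- Hochschild `n`-cocycle, `n = m + 1 ≥ 1`. -/
def ZH {m : ℕ} (f : (Fin (m + 1) → A) → M) : Prop := IsML k f ∧ dHoch f = 0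

/-- Hochschild coboundary in degree `1` (trivial, since `C⁰_Hoch = 0`). -/
def BH1 (f : (Fin 1 → A) → M) : Prop := f = 0

/-- Hochschild coboundary in degree `m + 2`. -/
def BH {m : ℕ} (f : (Fin (m + 2) → A) → M) : Prop :=
  ∃ g : (Fin (m + 1) → A) → M, IsML k g ∧ f = dHoch g

/-- AssDer `1`-cocycle. -/
def ZA1 (hh : A → A) (hM : M → M) (f : (Fin 1 → A) → M) : Prop :=
  IsML k f ∧ dA1 hh hM f = 0

/-- AssDer `(m+2)`-cocycle. -/
def ZA (hh : A → A) (hM : M → M) {m : ℕ}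
    (f₁ : (Fin (m + 2) → A) → M) (f₂ : (Fin (m + 1) → A) → M) : Prop :=
  IsML k f₁ ∧ IsML k f₂ ∧ dAn hh hM f₁ f₂ = 0

/-- AssDer coboundary in degree `1` (trivial, since `C⁰_AssDer = 0`). -/
def BA1 (f : (Fin 1 → A) → M) : Prop := f = 0

/-- AssDer coboundary in degree `2`. -/
def BA2 (hh : A → A) (hM : M → M) (f₁ : (Fin 2 → A) → M) (f₂ : (Fin 1 → A) → M) : Prop :=
  ∃ g : (Fin 1 → A) → M, IsML k g ∧ (f₁, f₂) = dA1 hh hM g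

/-- AssDer coboundary in degree `m + 3`. -/
def BA (hh : A → A) (hM : M → M) {m : ℕ}
    (f₁ : (Fin (m + 3) → A) → M) (f₂ : (Fin (m + 2) → A) → M) : Prop :=
  ∃ (g₁ : (Fin (m + 2) → A) → M) (g₂ : (Fin (m + 1) → A) → M),
    IsML k g₁ ∧ IsML k g₂ ∧ (f₁, f₂) = dAn hh hM g₁ g₂

end Predicates

section Aux

variable {k A M : Type*} [Field k] [Ring A] [Algebra k A] [AddCommGroup M] [Module k M]
  [Module A M] [Module Aᵐᵒᵖ M]

/-! ### The vector underlying `insMul` -/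

def muV {N : ℕ} (v : Fin (N + 2) → A) (i : Fin (N + 1)) : Fin (N + 1) → A := fun j =>
  if (j : ℕ) < (i : ℕ) then v ⟨j, Nat.lt_succ_of_lt j.isLt⟩
  else if (j : ℕ) = (i : ℕ) then
    v ⟨j, Nat.lt_succ_of_lt j.isLt⟩ * v ⟨(j : ℕ) + 1, Nat.succ_lt_succ j.isLt⟩
  else v ⟨(j : ℕ) + 1, Nat.succ_lt_succ j.isLt⟩

lemma insMul_muV {N : ℕ} (f : (Fin (N + 1) → A) → M) (i : Fin (N + 1)) (v : Fin (N + 2) → A) :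
    insMul (· * ·) f i v = f (muV v i) := rfl

lemma muV_update_castSucc {N : ℕ} (v : Fin (N+2) → A) (i : Fin (N+1)) (a : A) :
    muV (Function.update v i.castSucc a) i = Function.update (muV v i) i (a * v i.succ) := by
  funext t
  simp only [muV, Function.update_apply, Fin.ext_iff, Fin.coe_castSucc, Fin.val_succ]
  split_ifs <;> first
    | rfl
    | omega
    | (congr 1 <;> first | (apply congrArg; exact Fin.ext (by simp; omega)) | rfl)

lemma muV_update_succ {N : ℕ} (v : Fin (N+2) → A) (i : Fin (N+1)) (a : A) :
    muV (Function.update v i.succ a) i = Function.update (muV v i) i (v i.castSucc * a) := by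
  funext t
  simp only [muV, Function.update_apply, Fin.ext_iff, Fin.coe_castSucc, Fin.val_succ]
  split_ifs <;> first
    | rfl
    | omega
    | (congr 1 <;> first | (apply congrArg; exact Fin.ext (by simp; omega)) | rfl)

lemma muV_update_lt {N : ℕ} (v : Fin (N+2) → A) {i j : Fin (N+1)} (hj : j < i) (a : A) :
    muV (Function.update v j.castSucc a) i = Function.update (muV v i) j a := by
  have hj' : (j : ℕ) < (i : ℕ) := hj
  funext t
  simp only [muV, Function.update_apply, Fin.ext_iff, Fin.coe_castSucc, Fin.val_succ]
  split_ifs <;> first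
    | rfl
    | omega
    | (congr 1 <;> first | (apply congrArg; exact Fin.ext (by simp; omega)) | rfl)

lemma muV_update_gt {N : ℕ} (v : Fin (N+2) → A) {i j : Fin (N+1)} (hj : i < j) (a : A) :
    muV (Function.update v j.succ a) i = Function.update (muV v i) j a := by
  have hj' : (i : ℕ) < (j : ℕ) := hj
  funext t
  simp only [muV, Function.update_apply, Fin.ext_iff, Fin.coe_castSucc, Fin.val_succ]
  split_ifs <;> first
    | rfl
    | omega
    | (congr 1 <;> first | (apply congrArg; exact Fin.ext (by simp; omega)) | rfl)

lemma muV_apply_lt {N : ℕ} (v : Fin (N+2) → A) {i j : Fin (N+1)} (hj : j < i) :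
    muV v i j = v j.castSucc := by
  have hj' : (j : ℕ) < (i : ℕ) := hj
  simp only [muV, if_pos hj']
  rfl

lemma muV_apply_gt {N : ℕ} (v : Fin (N+2) → A) {i j : Fin (N+1)} (hj : i < j) :
    muV v i j = v j.succ := by
  have hj' : (i : ℕ) < (j : ℕ) := hj
  rw [muV, if_neg (by omega), if_neg (by omega)]
  rfl

lemma muV_apply_self {N : ℕ} (v : Fin (N+2) → A) (i : Fin (N+1)) :
    muV v i i = v i.castSucc * v i.succ := by
  simp only [muV, lt_irrefl, if_neg (lt_irrefl _), if_pos rfl]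
  rfl

lemma succAbove_castSucc_lt {N : ℕ} {i j : Fin (N+1)} (hj : j < i) :
    Fin.succAbove i.castSucc j = j.castSucc :=
  Fin.succAbove_of_castSucc_lt _ _ (Fin.castSucc_lt_castSucc_iff.2 hj)

lemma succAbove_castSucc_ge {N : ℕ} {i j : Fin (N+1)} (hj : i ≤ j) :
    Fin.succAbove i.castSucc j = j.succ :=
  Fin.succAbove_of_le_castSucc _ _ (Fin.castSucc_le_castSucc_iff.2 hj)

/-! ### Linearity of the differentials in the cochain -/

lemma dHoch_add {m : ℕ} (f g : (Fin (m+1) → A) → M) :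
    dHoch (f + g) = dHoch f + dHoch g := by
  funext v
  simp only [dHoch, insMul_muV, Pi.add_apply, smul_add, Finset.sum_add_distrib]
  abel

lemma dHoch_zsmul {m : ℕ} (c : ℤ) (f : (Fin (m+1) → A) → M) :
    dHoch (c • f) = c • dHoch f := by
  funext v
  have h1 : ∀ x : M, v 0 • c • x = c • v 0 • x := fun x => smul_comm _ _ _
  have h2 : ∀ (a : Aᵐᵒᵖ) (x : M), a • c • x = c • a • x := fun a x => smul_comm _ _ _
  have h3 : ∀ (d : ℤ) (x : M), d • c • x = c • d • x := fun d x => smul_comm _ _ _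
  simp only [dHoch, insMul_muV, Pi.smul_apply, h1, h2, h3, Finset.smul_sum, smul_add]

lemma dHoch_zero {m : ℕ} : dHoch (0 : (Fin (m+1) → A) → M) = 0 := by
  funext v
  simp [dHoch, insMul_muV]

lemma dHoch_neg {m : ℕ} (f : (Fin (m+1) → A) → M) : dHoch (-f) = -dHoch f := by
  rw [show -f = (-1 : ℤ) • f by funext v; simp, dHoch_zsmul]
  funext v; simp

lemma dHoch_sub {m : ℕ} (f g : (Fin (m+1) → A) → M) :
    dHoch (f - g) = dHoch f - dHoch g := by
  rw [sub_eq_add_neg, dHoch_add, dHoch_neg, ← sub_eq_add_neg]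

lemma deltaMap_add (hh : A → A) (hM : M →ₗ[k] M) {N : ℕ} (f g : (Fin N → A) → M) :
    deltaMap hh ⇑hM (f + g) = deltaMap hh ⇑hM f + deltaMap hh ⇑hM g := by
  funext v
  simp only [deltaMap, insUn, Pi.add_apply, map_add, Finset.sum_add_distrib]
  abel

lemma deltaMap_zsmul (hh : A → A) (hM : M →ₗ[k] M) {N : ℕ} (c : ℤ) (f : (Fin N → A) → M) :
    deltaMap hh ⇑hM (c • f) = c • deltaMap hh ⇑hM f := by
  funext v
  simp only [deltaMap, insUn, Pi.smul_apply, map_zsmul, ← Finset.smul_sum, smul_sub]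

lemma deltaMap_neg (hh : A → A) (hM : M →ₗ[k] M) {N : ℕ} (f : (Fin N → A) → M) :
    deltaMap hh ⇑hM (-f) = -deltaMap hh ⇑hM f := by
  rw [show -f = (-1 : ℤ) • f by funext v; simp, deltaMap_zsmul]
  funext v; simp

lemma deltaMap_sub (hh : A → A) (hM : M →ₗ[k] M) {N : ℕ} (f g : (Fin N → A) → M) :
    deltaMap hh ⇑hM (f - g) = deltaMap hh ⇑hM f - deltaMap hh ⇑hM g := by
  rw [sub_eq_add_neg, deltaMap_add, deltaMap_neg, ← sub_eq_add_neg]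

/-! ### Multilinearity lemmas -/

lemma isML_zero {N : ℕ} : IsML k (0 : (Fin N → A) → M) := ⟨0, by funext v; simp⟩

lemma IsML.add {N : ℕ} {f g : (Fin N → A) → M} (hf : IsML k f) (hg : IsML k g) :
    IsML k (f + g) := by
  obtain ⟨F, rfl⟩ := hf; obtain ⟨G, rfl⟩ := hg
  exact ⟨F + G, by funext v; simp⟩

lemma IsML.zsmul {N : ℕ} {f : (Fin N → A) → M} (c : ℤ) (hf : IsML k f) :
    IsML k (c • f) := by
  obtain ⟨F, rfl⟩ := hf
  exact ⟨c • F, by funext v; simp⟩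

lemma IsML.neg {N : ℕ} {f : (Fin N → A) → M} (hf : IsML k f) : IsML k (-f) := by
  obtain ⟨F, rfl⟩ := hf
  exact ⟨-F, by funext v; simp⟩

lemma IsML.sub {N : ℕ} {f g : (Fin N → A) → M} (hf : IsML k f) (hg : IsML k g) :
    IsML k (f - g) := by
  obtain ⟨F, rfl⟩ := hf; obtain ⟨G, rfl⟩ := hg
  exact ⟨F - G, by funext v; simp⟩

lemma IsML.delta (h : A →ₗ[k] A) (hM : M →ₗ[k] M) {N : ℕ} {f : (Fin N → A) → M}
    (hf : IsML k f) : IsML k (deltaMap ⇑h ⇑hM f) := by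
  obtain ⟨F, rfl⟩ := hf
  refine ⟨(∑ i : Fin N, F.compLinearMap (fun j => if j = i then h else LinearMap.id))
    - hM.compMultilinearMap F, ?_⟩
  funext v
  simp only [MultilinearMap.sub_apply, MultilinearMap.sum_apply,
    MultilinearMap.compLinearMap_apply, LinearMap.compMultilinearMap_apply, deltaMap, insUn]
  congr 1
  refine Finset.sum_congr rfl fun i _ => ?_
  congr 1
  funext j
  rcases eq_or_ne j i with rfl | hj
  · simp
  · simp [Function.update_of_ne hj, hj]

end Aux

section Key

variable {k A M : Type*} [Field k] [Ring A] [Algebra k A] [AddCommGroup M] [Module k M]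
  [Module A M] [Module Aᵐᵒᵖ M]
  (h : A →ₗ[k] A) (hM : M →ₗ[k] M)

lemma sum_mu {n : ℕ} (hder : ∀ a b : A, h (a*b) = h a * b + a * h b)
    (F : MultilinearMap k (fun _ : Fin (n+1) => A) M) (v : Fin (n+2) → A) (i : Fin (n+1)) :
    ∑ j : Fin (n+2), F (muV (Function.update v j (h (v j))) i)
      = ∑ j : Fin (n+1), F (Function.update (muV v i) j (h (muV v i j))) := by
  set G : Fin (n+1) → M := fun j => F (Function.update (muV v i) j (h (muV v i j))) with hG
  set X : M := F (muV (Function.update v i.succ (h (v i.succ))) i) with hX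
  rw [Fin.sum_univ_succAbove (fun j => F (muV (Function.update v j (h (v j))) i)) i.castSucc]
  have hsum : ∑ j : Fin (n+1),
      F (muV (Function.update v (Fin.succAbove i.castSucc j)
        (h (v (Fin.succAbove i.castSucc j)))) i) = ∑ j, Function.update G i X j := by
    apply Finset.sum_congr rfl
    intro j _
    rcases lt_trichotomy j i with hj | rfl | hj
    · rw [Function.update_of_ne hj.ne]; simp only [hG]
      rw [succAbove_castSucc_lt hj, muV_update_lt v hj, muV_apply_lt v hj]
    · rw [Function.update_self, succAbove_castSucc_ge le_rfl, hX]
    · rw [Function.update_of_ne hj.ne']; simp only [hG]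
      rw [succAbove_castSucc_ge hj.le, muV_update_gt v hj, muV_apply_gt v hj]
  rw [hsum, Finset.sum_update_of_mem (Finset.mem_univ i)]
  have hGi : G i = F (muV (Function.update v i.castSucc (h (v i.castSucc))) i) + X := by
    simp only [hG]
    simp only [muV_apply_self, hder, muV_update_castSucc, muV_update_succ, hX]
    rw [MultilinearMap.map_update_add]
  rw [← Finset.add_sum_erase _ G (Finset.mem_univ i), hGi, Finset.erase_eq]
  abel

lemma key {n : ℕ}
    (hder : ∀ a b : A, h (a * b) = h a * b + a * h b)
    (hM1 : ∀ (a : A) (m : M), hM (a • m) = h a • m + a • hM m)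
    (hM2 : ∀ (a : A) (m : M),
      hM (MulOpposite.op a • m) = MulOpposite.op a • hM m + MulOpposite.op (h a) • m)
    (F : MultilinearMap k (fun _ : Fin (n+1) => A) M) :
    dHoch (deltaMap ⇑h ⇑hM ⇑F) = deltaMap ⇑h ⇑hM (dHoch ⇑F) := by
  funext v
  have e0 : deltaMap ⇑h ⇑hM (dHoch ⇑F) v
      = (∑ j : Fin (n+2), dHoch ⇑F (Function.update v j (h (v j)))) - hM (dHoch ⇑F v) := rfl
  have e1 : ∀ w : Fin (n+2) → A, dHoch ⇑F w
      = w 0 • F (fun t => w t.succ)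
        + (∑ i : Fin (n+1), ((-1:ℤ)^((i:ℕ)+1)) • F (muV w i))
        + ((-1:ℤ)^(n+2)) • (MulOpposite.op (w (Fin.last (n+1))) • F (fun t => w t.castSucc)) :=
    fun w => rfl
  have e2 : dHoch (deltaMap ⇑h ⇑hM ⇑F) v
      = v 0 • deltaMap ⇑h ⇑hM ⇑F (fun t => v t.succ)
        + (∑ i : Fin (n+1), ((-1:ℤ)^((i:ℕ)+1)) • deltaMap ⇑h ⇑hM ⇑F (muV v i))
        + ((-1:ℤ)^(n+2)) • (MulOpposite.op (v (Fin.last (n+1))) •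
            deltaMap ⇑h ⇑hM ⇑F (fun t => v t.castSucc)) := rfl
  have e3 : ∀ w : Fin (n+1) → A, deltaMap ⇑h ⇑hM ⇑F w
      = (∑ j : Fin (n+1), F (Function.update w j (h (w j)))) - hM (F w) := fun w => rfl
  have eP : ∑ j : Fin (n+2), (Function.update v j (h (v j)) 0) •
        F (fun t => Function.update v j (h (v j)) t.succ)
      = h (v 0) • F (fun t => v t.succ)
        + ∑ j : Fin (n+1), v 0 • F (Function.update (fun t => v t.succ) j (h (v j.succ))) := by
    rw [Fin.sum_univ_succ (f := fun j : Fin (n+2) => (Function.update v j (h (v j)) 0) •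
      F (fun t => Function.update v j (h (v j)) t.succ))]
    congr 1
    refine Finset.sum_congr rfl fun j _ => ?_
    rw [Function.update_of_ne (Fin.succ_ne_zero j).symm]
    have heq : (fun t : Fin (n+1) => Function.update v j.succ (h (v j.succ)) t.succ)
        = Function.update (fun t : Fin (n+1) => v t.succ) j (h (v j.succ)) := by
      funext t
      rcases eq_or_ne t j with rfl | ht
      · rw [Function.update_self, Function.update_self]
      · rw [Function.update_of_ne (fun hc => ht (Fin.succ_injective _ hc)),
          Function.update_of_ne ht]
    rw [heq]
  have eQ : ∑ j : Fin (n+2), ∑ i : Fin (n+1),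
        ((-1:ℤ)^((i:ℕ)+1)) • F (muV (Function.update v j (h (v j))) i)
      = ∑ i : Fin (n+1), ∑ j : Fin (n+1),
          ((-1:ℤ)^((i:ℕ)+1)) • F (Function.update (muV v i) j (h (muV v i j))) := by
    rw [Finset.sum_comm]
    refine Finset.sum_congr rfl fun i _ => ?_
    rw [← Finset.smul_sum, sum_mu h hder F v i, Finset.smul_sum]
  have eR : ∑ j : Fin (n+2), ((-1:ℤ)^(n+2)) •
        (MulOpposite.op (Function.update v j (h (v j)) (Fin.last (n+1))) •
          F (fun t => Function.update v j (h (v j)) t.castSucc))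
      = (∑ j : Fin (n+1), ((-1:ℤ)^(n+2)) • (MulOpposite.op (v (Fin.last (n+1))) •
          F (Function.update (fun t => v t.castSucc) j (h (v j.castSucc)))))
        + ((-1:ℤ)^(n+2)) • (MulOpposite.op (h (v (Fin.last (n+1)))) •
            F (fun t => v t.castSucc)) := by
    rw [Fin.sum_univ_castSucc (f := fun j : Fin (n+2) => ((-1:ℤ)^(n+2)) •
      (MulOpposite.op (Function.update v j (h (v j)) (Fin.last (n+1))) •
        F (fun t => Function.update v j (h (v j)) t.castSucc)))]
    congr 1
    · refine Finset.sum_congr rfl fun j _ => ?_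
      rw [Function.update_of_ne (Fin.castSucc_lt_last j).ne']
      have heq : (fun t : Fin (n+1) => Function.update v j.castSucc (h (v j.castSucc)) t.castSucc)
          = Function.update (fun t : Fin (n+1) => v t.castSucc) j (h (v j.castSucc)) := by
        funext t
        rcases eq_or_ne t j with rfl | ht
        · rw [Function.update_self, Function.update_self]
        · rw [Function.update_of_ne (fun hc => ht (Fin.castSucc_injective _ hc)),
            Function.update_of_ne ht]
      rw [heq]
    · rw [Function.update_self]
      have heq : (fun t : Fin (n+1) =>
            Function.update v (Fin.last (n+1)) (h (v (Fin.last (n+1)))) t.castSucc)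
          = fun t : Fin (n+1) => v t.castSucc := by
        funext t
        rw [Function.update_of_ne (Fin.castSucc_lt_last t).ne]
      rw [heq]
  rw [e2, e0]
  simp only [e3, e1]
  simp only [smul_sub, Finset.sum_sub_distrib, Finset.sum_add_distrib, map_add, map_sum,
    map_zsmul, hM1, hM2, smul_add, Finset.smul_sum]
  rw [eP, eQ, eR]
  abel

lemma dHoch_delta_comm {n : ℕ}
    (hder : ∀ a b : A, h (a * b) = h a * b + a * h b)
    (hM1 : ∀ (a : A) (m : M), hM (a • m) = h a • m + a • hM m)
    (hM2 : ∀ (a : A) (m : M),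
      hM (MulOpposite.op a • m) = MulOpposite.op a • hM m + MulOpposite.op (h a) • m)
    {f : (Fin (n+1) → A) → M} (hf : IsML k f) :
    dHoch (deltaMap ⇑h ⇑hM f) = deltaMap ⇑h ⇑hM (dHoch f) := by
  obtain ⟨F, rfl⟩ := hf
  exact key h hM hder hM1 hM2 F

end Key


/-- Let `(A, h)` be an AssDer pair and `(M, h_M)` a module over
it.  Since the AssDer complex is the mapping cone of the chain map `Δ` on the
Hochschild complex, there is a long exact sequence
`0 → H¹_AssDer → Der(A,M) → Der(A,M) → H²_AssDer → H²_Hoch → ⋯ →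
H^{n−1}_Hoch → Hⁿ_AssDer → Hⁿ_Hoch → Hⁿ_Hoch → H^{n+1}_AssDer → ⋯`
(here `Der(A,M) = H¹_Hoch(A,M)`).  Exactness is expressed at the level of cocycles and
coboundaries:  the maps are `α : Hⁿ_AssDer → Hⁿ_Hoch, (f₁,f₂) ↦ f₁`, the map induced
by `Δ : Hⁿ_Hoch → Hⁿ_Hoch`, and `β : Hⁿ_Hoch → H^{n+1}_AssDer, f ↦ (0, f)`. -/
theorem assDer_Hochschild_long_exact_sequence
    {k A M : Type*} [Field k] [CharZero k] [Ring A] [Algebra k A]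
    [AddCommGroup M] [Module k M] [Module A M] [Module Aᵐᵒᵖ M]
    [SMulCommClass A Aᵐᵒᵖ M] [IsScalarTower k A M] [IsScalarTower k Aᵐᵒᵖ M]
    (h : A →ₗ[k] A) (hM : M →ₗ[k] M)
    (hder : ∀ a b : A, h (a * b) = h a * b + a * h b)
    (hM1 : ∀ (a : A) (m : M), hM (a • m) = h a • m + a • hM m)
    (hM2 : ∀ (a : A) (m : M),
      hM (MulOpposite.op a • m) = MulOpposite.op a • hM m + MulOpposite.op (h a) • m) :
    -- exactness at `H¹_AssDer` (injectivity of `α`)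
    (∀ f : (Fin 1 → A) → M, ZA1 k ⇑h ⇑hM f → BH1 f → BA1 f) ∧
    -- exactness at the first copy of `H¹_Hoch = Der(A,M)` (image of `α` = kernel of `Δ`)
    (∀ f : (Fin 1 → A) → M, ZH k f →
      (BH1 (deltaMap ⇑h ⇑hM f) ↔ ∃ g : (Fin 1 → A) → M, ZA1 k ⇑h ⇑hM g ∧ BH1 (f - g))) ∧
    -- exactness at the second copy of `H¹_Hoch` (image of `Δ` = kernel of `β`)
    (∀ f : (Fin 1 → A) → M, ZH k f →
      ((∃ u : (Fin 1 → A) → M, IsML k u ∧ dA1 ⇑h ⇑hM u = (0, f)) ↔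
        ∃ g : (Fin 1 → A) → M, ZH k g ∧ BH1 (f - deltaMap ⇑h ⇑hM g))) ∧
    -- exactness at `H²_AssDer` (image of `β` = kernel of `α`)
    (∀ (f₁ : (Fin 2 → A) → M) (f₂ : (Fin 1 → A) → M), ZA k ⇑h ⇑hM f₁ f₂ →
      (BH k f₁ ↔ ∃ g : (Fin 1 → A) → M, ZH k g ∧ BA2 k ⇑h ⇑hM f₁ (f₂ - g))) ∧
    -- exactness at `Hⁿ_AssDer`, `n = m + 3 ≥ 3` (image of `β` = kernel of `α`)
    (∀ (m : ℕ) (f₁ : (Fin (m + 3) → A) → M) (f₂ : (Fin (m + 2) → A) → M),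
      ZA k ⇑h ⇑hM f₁ f₂ →
      (BH k f₁ ↔ ∃ g : (Fin (m + 2) → A) → M, ZH k g ∧ BA k ⇑h ⇑hM f₁ (f₂ - g))) ∧
    -- exactness at the first copy of `Hⁿ_Hoch`, `n = m + 2 ≥ 2` (image of `α` = kernel of `Δ`)
    (∀ (m : ℕ) (f : (Fin (m + 2) → A) → M), ZH k f →
      (BH k (deltaMap ⇑h ⇑hM f) ↔
        ∃ (g₁ : (Fin (m + 2) → A) → M) (g₂ : (Fin (m + 1) → A) → M),
          ZA k ⇑h ⇑hM g₁ g₂ ∧ BH k (f - g₁))) ∧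
    -- exactness at the second copy of `Hⁿ_Hoch`, `n = m + 2 ≥ 2` (image of `Δ` = kernel of `β`)
    (∀ (m : ℕ) (f : (Fin (m + 2) → A) → M), ZH k f →
      ((∃ (u₁ : (Fin (m + 2) → A) → M) (u₂ : (Fin (m + 1) → A) → M),
          IsML k u₁ ∧ IsML k u₂ ∧ dAn ⇑h ⇑hM u₁ u₂ = (0, f)) ↔
        ∃ g : (Fin (m + 2) → A) → M, ZH k g ∧ BH k (f - deltaMap ⇑h ⇑hM g))) := by
  have hsq : ∀ (a : ℕ), ((-1:ℤ)^a) * ((-1:ℤ)^a) = 1 := fun a => by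
    rw [← pow_add]; exact Even.neg_one_pow ⟨a, rfl⟩
  refine ⟨?_, ?_, ?_, ?_, ?_, ?_, ?_⟩
  -- (1) exactness at H¹_AssDer
  · intro f _ hf
    exact hf
  -- (2) exactness at the first copy of Der(A,M)
  · intro f hf
    constructor
    · intro hd
      have h2 : deltaMap ⇑h ⇑hM f = 0 := hd
      refine ⟨f, ⟨hf.1, ?_⟩, sub_self f⟩
      have e : dA1 ⇑h ⇑hM f = (dHoch f, fun v => -(deltaMap ⇑h ⇑hM f v)) := rfl
      rw [e, hf.2, h2]
      have e2 : (fun v : Fin 1 → A => -((0 : (Fin 1 → A) → M) v)) = 0 := by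
        funext v; simp
      rw [e2]
      rfl
    · rintro ⟨g, ⟨hgML, hg0⟩, hfg⟩
      have hfg' : f = g := by
        have : f - g = 0 := hfg
        exact sub_eq_zero.mp this
      show deltaMap ⇑h ⇑hM f = 0
      rw [hfg']
      funext v
      have h2 := congrFun (congrArg Prod.snd hg0) v
      simp only [dA1, Pi.zero_apply] at h2
      simpa [neg_eq_zero] using h2
  -- (3) exactness at the second copy of Der(A,M)
  · intro f hf
    constructor
    · rintro ⟨u, huML, hu⟩
      have h1 : dHoch u = 0 := congrArg Prod.fst hu
      have h2 : (fun v => -(deltaMap ⇑h ⇑hM u v)) = f := congrArg Prod.snd hu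
      refine ⟨-u, ⟨huML.neg, by rw [dHoch_neg, h1, neg_zero]⟩, ?_⟩
      show f - deltaMap ⇑h ⇑hM (-u) = 0
      rw [deltaMap_neg]
      funext v
      have h2v := congrFun h2 v
      simp [← h2v]
    · rintro ⟨g, ⟨hgML, hg0⟩, hfg⟩
      have hfd : f = deltaMap ⇑h ⇑hM g := by
        have : f - deltaMap ⇑h ⇑hM g = 0 := hfg
        exact sub_eq_zero.mp this
      refine ⟨-g, hgML.neg, ?_⟩
      show (dHoch (-g), fun v => -(deltaMap ⇑h ⇑hM (-g) v)) = (0, f)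
      rw [dHoch_neg, hg0, neg_zero, deltaMap_neg]
      have e : (fun v : Fin 1 → A => -((-(deltaMap ⇑h ⇑hM g)) v)) = f := by
        funext v; simp [hfd]
      rw [e]

  -- (4) exactness at H²_AssDer
  · intro f₁ f₂ hZA
    obtain ⟨hML1, hML2, hz⟩ := hZA
    have hz2 : ∀ v, dHoch f₂ v = -deltaMap ⇑h ⇑hM f₁ v := by
      intro v
      have h0 := congrFun (congrArg Prod.snd hz) v
      simp only [dAn, Pi.zero_apply] at h0
      have hpw : ((-1:ℤ)^(0+2)) = 1 := by norm_num
      rw [hpw, one_smul] at h0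
      exact eq_neg_of_add_eq_zero_left h0
    constructor
    · rintro ⟨u, huML, hfu⟩
      refine ⟨f₂ + deltaMap ⇑h ⇑hM u, ⟨hML2.add (huML.delta h hM), ?_⟩, u, huML, ?_⟩
      · rw [dHoch_add, dHoch_delta_comm h hM hder hM1 hM2 huML, ← hfu]
        funext v
        rw [Pi.add_apply, hz2 v, Pi.zero_apply, neg_add_cancel]
      · show (f₁, f₂ - (f₂ + deltaMap ⇑h ⇑hM u))
            = (dHoch u, fun v => -(deltaMap ⇑h ⇑hM u v))
        rw [hfu]
        have e : f₂ - (f₂ + deltaMap ⇑h ⇑hM u) = fun v => -(deltaMap ⇑h ⇑hM u v) := by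
          funext v; simp
        rw [e]
    · rintro ⟨g, hgZH, w, hwML, hw⟩
      exact ⟨w, hwML, congrArg Prod.fst hw⟩
  -- (5) exactness at Hⁿ_AssDer, n ≥ 3
  · intro m f₁ f₂ hZA
    obtain ⟨hML1, hML2, hz⟩ := hZA
    have hz2 : ∀ v, dHoch f₂ v = ((-1:ℤ)^(m+2)) • deltaMap ⇑h ⇑hM f₁ v := by
      intro v
      have h0 := congrFun (congrArg Prod.snd hz) v
      simp only [dAn, Pi.zero_apply] at h0
      have h1 := eq_neg_of_add_eq_zero_left h0
      rw [h1, ← neg_smul]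
      congr 1
      ring
    constructor
    · rintro ⟨u, huML, hfu⟩
      refine ⟨f₂ - ((-1:ℤ)^(m+2)) • deltaMap ⇑h ⇑hM u,
        ⟨hML2.sub ((huML.delta h hM).zsmul _), ?_⟩, u, 0, huML, isML_zero, ?_⟩
      · rw [dHoch_sub, dHoch_zsmul, dHoch_delta_comm h hM hder hM1 hM2 huML, ← hfu]
        funext v
        rw [Pi.sub_apply, Pi.smul_apply, hz2 v, Pi.zero_apply, sub_self]
      · show (f₁, f₂ - (f₂ - ((-1:ℤ)^(m+2)) • deltaMap ⇑h ⇑hM u))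
            = (dHoch u, fun v => dHoch (0 : (Fin (m+1) → A) → M) v
                + ((-1:ℤ)^(m+2)) • deltaMap ⇑h ⇑hM u v)
        rw [hfu, dHoch_zero]
        have e : f₂ - (f₂ - ((-1:ℤ)^(m+2)) • deltaMap ⇑h ⇑hM u)
            = fun v => (0 : (Fin (m+2) → A) → M) v
                + ((-1:ℤ)^(m+2)) • deltaMap ⇑h ⇑hM u v := by
          funext v; simp
        rw [e]
    · rintro ⟨g, hgZH, g₁, g₂, hMLg₁, hMLg₂, heq⟩
      exact ⟨g₁, hMLg₁, congrArg Prod.fst heq⟩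
  -- (6) exactness at the first copy of Hⁿ_Hoch, n ≥ 2
  · intro m f hZH
    obtain ⟨hML, hz⟩ := hZH
    constructor
    · rintro ⟨u, huML, hu⟩
      refine ⟨f, ((-1:ℤ)^(m+3)) • u, ⟨hML, huML.zsmul _, ?_⟩, 0, isML_zero, ?_⟩
      · show (dHoch f, fun v => dHoch (((-1:ℤ)^(m+3)) • u) v
            + ((-1:ℤ)^(m+2)) • deltaMap ⇑h ⇑hM f v) = 0
        rw [hz, dHoch_zsmul, hu]
        have e : (fun v => (((-1:ℤ)^(m+3)) • dHoch u) v + ((-1:ℤ)^(m+2)) • dHoch u v)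
            = (0 : (Fin (m+2) → A) → M) := by
          funext v
          rw [Pi.smul_apply, Pi.zero_apply, pow_succ, mul_neg_one, neg_smul, neg_add_cancel]
        rw [e]
        rfl
      · show f - f = dHoch (0 : (Fin (m+1) → A) → M)
        rw [sub_self, dHoch_zero]
    · rintro ⟨g₁, g₂, ⟨hg1ML, hg2ML, hzA⟩, w, hwML, hw⟩
      refine ⟨((-1:ℤ)^(m+3)) • g₂ + deltaMap ⇑h ⇑hM w,
        (hg2ML.zsmul _).add (hwML.delta h hM), ?_⟩
      rw [dHoch_add, dHoch_zsmul, dHoch_delta_comm h hM hder hM1 hM2 hwML, ← hw, deltaMap_sub]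
      have hg₂ : ∀ v, dHoch g₂ v = -(((-1:ℤ)^(m+2)) • deltaMap ⇑h ⇑hM g₁ v) := by
        intro v
        have h0 := congrFun (congrArg Prod.snd hzA) v
        simp only [dAn, Pi.zero_apply] at h0
        exact eq_neg_of_add_eq_zero_left h0
      funext v
      rw [Pi.add_apply, Pi.smul_apply, hg₂ v, Pi.sub_apply, smul_neg, smul_smul, ← pow_add]
      have hodd : ((-1:ℤ))^((m+3)+(m+2)) = -1 := Odd.neg_one_pow ⟨m+2, by ring⟩
      rw [hodd, neg_smul, neg_neg, one_smul]
      abel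
  -- (7) exactness at the second copy of Hⁿ_Hoch, n ≥ 2
  · intro m f hZH
    obtain ⟨hML, hz⟩ := hZH
    constructor
    · rintro ⟨u₁, u₂, hu1ML, hu2ML, hu⟩
      have h1 : dHoch u₁ = 0 := congrArg Prod.fst hu
      have h2 : (fun v => dHoch u₂ v + ((-1:ℤ)^(m+2)) • deltaMap ⇑h ⇑hM u₁ v) = f :=
        congrArg Prod.snd hu
      refine ⟨((-1:ℤ)^(m+2)) • u₁,
        ⟨hu1ML.zsmul _, by rw [dHoch_zsmul, h1, smul_zero]⟩, u₂, hu2ML, ?_⟩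
      rw [deltaMap_zsmul]
      funext v
      rw [Pi.sub_apply, Pi.smul_apply, ← congrFun h2 v]
      abel
    · rintro ⟨g, ⟨hgML, hgz⟩, w, hwML, hw⟩
      refine ⟨((-1:ℤ)^(m+2)) • g, w, hgML.zsmul _, hwML, ?_⟩
      show (dHoch (((-1:ℤ)^(m+2)) • g),
            fun v => dHoch w v
              + ((-1:ℤ)^(m+2)) • deltaMap ⇑h ⇑hM (((-1:ℤ)^(m+2)) • g) v) = (0, f)
      rw [dHoch_zsmul, hgz, smul_zero, deltaMap_zsmul]
      have e : (fun v => dHoch w v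
            + ((-1:ℤ)^(m+2)) • (((-1:ℤ)^(m+2)) • deltaMap ⇑h ⇑hM g) v) = f := by
        funext v
        rw [Pi.smul_apply, smul_smul, hsq, one_smul]
        have hv := congrFun hw v
        rw [Pi.sub_apply] at hv
        rw [← hv]
        abel
      rw [e]

end Stmt11
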